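/- (Alexander's trick, boundary-fixing version) Any homeomorphism of the closed 2-disk D² that restricts to the identity on ∂D² is isotopic to the identity through homeomorphisms fixing ∂D² pointwise, via the Alexander isotopy ψ_x(z) = (1−x)·f(z/(1−x)) for |z| ≤ 1−x and ψ_x(z) = z otherwise. -/
import Mathlib

open scoped unitInterval
open Filter Topology
noncomputable section
/-- The closed unit disk in `ℂ ≅ ℝ²`. -/
abbrev Disk2 : Type := Metric.closedBall (0 : ℂ) 1

namespace AlexanderAux

/-- retraction of the plane onto the disk -/
def projDisk (z : ℂ) : Disk2 :=
  ⟨(max 1 ‖z‖)⁻¹ • z, by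
    rw [Metric.mem_closedBall, dist_zero_right, norm_smul, norm_inv, Real.norm_eq_abs,
      abs_of_pos (lt_of_lt_of_le one_pos (le_max_left _ _))]
    rw [inv_mul_le_iff₀ (lt_of_lt_of_le one_pos (le_max_left _ _)), mul_one]
    exact le_max_right _ _⟩

lemma continuous_projDisk : Continuous projDisk := by
  apply Continuous.subtype_mk
  exact ((continuous_const.max continuous_norm).inv₀
    (fun z => ne_of_gt (lt_of_lt_of_le one_pos (le_max_left _ _)))).smul continuous_id

lemma projDisk_of_le {z : ℂ} (h : ‖z‖ ≤ 1) : projDisk z = ⟨z, by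
    rwa [Metric.mem_closedBall, dist_zero_right]⟩ := by
  apply Subtype.ext
  show (max 1 ‖z‖)⁻¹ • z = z
  rw [max_eq_left h, inv_one, one_smul]

variable (f : Disk2 ≃ₜ Disk2)

/-- extension of `f` to the plane, identity outside the disk -/
def ext (z : ℂ) : ℂ := if ‖z‖ ≤ 1 then (f (projDisk z) : ℂ) else z

lemma ext_of_le {z : ℂ} (h : ‖z‖ ≤ 1) :
    ext f z = (f ⟨z, by rwa [Metric.mem_closedBall, dist_zero_right]⟩ : ℂ) := by
  rw [ext, if_pos h, projDisk_of_le h]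

lemma norm_coe_le (w : Disk2) : ‖(w : ℂ)‖ ≤ 1 := by
  have := w.2; rwa [Metric.mem_closedBall, dist_zero_right] at this

lemma ext_norm_le {z : ℂ} (h : ‖z‖ ≤ 1) : ‖ext f z‖ ≤ 1 := by
  rw [ext_of_le f h]; exact norm_coe_le _

lemma ext_of_one_le (hbd : ∀ z : Disk2, ‖(z : ℂ)‖ = 1 → f z = z) {z : ℂ} (h : 1 ≤ ‖z‖) : ext f z = z := by
  rcases lt_or_eq_of_le h with h1 | h1
  · rw [ext, if_neg (not_le.mpr h1)]
  · rw [ext_of_le f h1.ge]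
    have := hbd ⟨z, by rw [Metric.mem_closedBall, dist_zero_right]; exact h1.ge⟩ h1.symm
    rw [this]

lemma ext_sub_bound (hbd : ∀ z : Disk2, ‖(z : ℂ)‖ = 1 → f z = z) (z : ℂ) : ‖ext f z - z‖ ≤ 2 := by
  rcases le_or_gt ‖z‖ 1 with h | h
  · calc ‖ext f z - z‖ ≤ ‖ext f z‖ + ‖z‖ := norm_sub_le _ _
      _ ≤ 1 + 1 := add_le_add (ext_norm_le f h) h
      _ = 2 := by norm_num
  · rw [ext_of_one_le f hbd h.le, sub_self, norm_zero]; norm_num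

/-- the Alexander isotopy on the plane, parameter `t = 1 - x` -/
def alex (p : ℝ × ℂ) : ℂ := p.2 + p.1 • (ext f (p.1⁻¹ • p.2) - p.1⁻¹ • p.2)

lemma alex_zero (z : ℂ) : alex f (0, z) = z := by simp [alex]

lemma alex_of_le (hbd : ∀ z : Disk2, ‖(z : ℂ)‖ = 1 → f z = z) {t : ℝ} (ht : 0 ≤ t) {z : ℂ} (hz : t ≤ ‖z‖) : alex f (t, z) = z := by
  rcases eq_or_lt_of_le ht with h0 | h0
  · rw [← h0, alex_zero]
  · have hu : 1 ≤ ‖t⁻¹ • z‖ := by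
      rw [norm_smul, Real.norm_eq_abs, abs_of_pos (inv_pos.mpr h0)]
      rw [le_inv_mul_iff₀ h0, mul_one]; exact hz
    rw [alex, ext_of_one_le f hbd hu]
    simp

lemma alex_smul {t : ℝ} (ht : 0 < t) (w : ℂ) :
    alex f (t, t • w) = t • ext f w := by
  rw [alex]
  simp only [inv_smul_smul₀ (ne_of_gt ht)]
  rw [smul_sub]
  ring_nf

lemma alex_norm_le (hbd : ∀ z : Disk2, ‖(z : ℂ)‖ = 1 → f z = z) {t : ℝ} (ht0 : 0 ≤ t) (ht1 : t ≤ 1) {z : ℂ} (hz : ‖z‖ ≤ 1) :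
    ‖alex f (t, z)‖ ≤ 1 := by
  rcases le_or_gt t ‖z‖ with h | h
  · rw [alex_of_le f hbd ht0 h]; exact hz
  · have ht : 0 < t := lt_of_le_of_lt (norm_nonneg z) h
    have hw : ‖t⁻¹ • z‖ ≤ 1 := by
      rw [norm_smul, Real.norm_eq_abs, abs_of_pos (inv_pos.mpr ht)]
      rw [inv_mul_le_iff₀ ht, mul_one]; exact h.le
    have : z = t • (t⁻¹ • z) := (smul_inv_smul₀ (ne_of_gt ht) z).symm
    rw [this, alex_smul f ht, norm_smul, Real.norm_eq_abs, abs_of_pos ht]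
    calc t * ‖ext f (t⁻¹ • z)‖ ≤ t * 1 := by
          exact mul_le_mul_of_nonneg_left (ext_norm_le f hw) ht.le
      _ ≤ 1 := by rw [mul_one]; exact ht1

lemma alex_continuous (hbd : ∀ z : Disk2, ‖(z : ℂ)‖ = 1 → f z = z) : Continuous (alex f) := by
  have hext : Continuous (ext f) := by
    apply Continuous.if_le
    · exact continuous_subtype_val.comp (f.continuous.comp continuous_projDisk)
    · exact continuous_id
    · exact continuous_norm
    · exact continuous_const
    · intro z hz
      have := hbd ⟨z, by rw [Metric.mem_closedBall, dist_zero_right]; exact hz.le⟩ hz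
      rw [projDisk_of_le hz.le, this]
  rw [continuous_iff_continuousAt]
  rintro ⟨t, z⟩
  rcases eq_or_ne t 0 with rfl | ht
  · unfold ContinuousAt
    have h1 : Tendsto (fun p : ℝ × ℂ => p.1 • (ext f (p.1⁻¹ • p.2) - p.1⁻¹ • p.2))
        (nhds ((0 : ℝ), z)) (nhds 0) := by
      apply squeeze_zero_norm (a := fun p : ℝ × ℂ => |p.1| * 2)
      · intro p
        rw [norm_smul, Real.norm_eq_abs]
        exact mul_le_mul_of_nonneg_left (ext_sub_bound f hbd _) (abs_nonneg _)
      · have : Tendsto (fun p : ℝ × ℂ => |p.1| * 2) (nhds ((0 : ℝ), z))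
            (nhds (|(0 : ℝ)| * 2)) :=
          ((continuous_abs.comp continuous_fst).mul continuous_const).continuousAt
        simpa using this
    have h2 : Tendsto (fun p : ℝ × ℂ => p.2) (nhds ((0 : ℝ), z)) (nhds z) :=
      continuous_snd.continuousAt
    have heq : alex f (0, z) = z + 0 := by rw [alex_zero, add_zero]
    rw [heq]
    exact h2.add h1
  · have hinv : ContinuousAt (fun p : ℝ × ℂ => p.1⁻¹ • p.2) (t, z) :=
      (continuousAt_fst.inv₀ ht).smul continuousAt_snd
    exact continuousAt_snd.add (continuousAt_fst.smul
      ((hext.continuousAt.comp hinv).sub hinv))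

lemma hbd_symm (hbd : ∀ z : Disk2, ‖(z : ℂ)‖ = 1 → f z = z) : ∀ z : Disk2, ‖(z : ℂ)‖ = 1 → f.symm z = z := by
  intro z hz
  have h1 := hbd z hz
  have := congrArg f.symm h1
  rw [Homeomorph.symm_apply_apply] at this
  exact this.symm

lemma alex_inverse (hbd : ∀ z : Disk2, ‖(z : ℂ)‖ = 1 → f z = z) {t : ℝ} (ht0 : 0 ≤ t) {z : ℂ} (_hz : ‖z‖ ≤ 1) :
    alex f (t, alex f.symm (t, z)) = z := by
  rcases eq_or_lt_of_le ht0 with h0 | h0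
  · rw [← h0, alex_zero, alex_zero]
  rcases le_or_gt t ‖z‖ with h | h
  · rw [alex_of_le f.symm (hbd_symm f hbd) ht0 h, alex_of_le f hbd ht0 h]
  · have hw : ‖t⁻¹ • z‖ ≤ 1 := by
      rw [norm_smul, Real.norm_eq_abs, abs_of_pos (inv_pos.mpr h0)]
      rw [inv_mul_le_iff₀ h0, mul_one]; exact h.le
    have hz' : z = t • (t⁻¹ • z) := (smul_inv_smul₀ (ne_of_gt h0) z).symm
    set u := t⁻¹ • z with hu
    have hmem : u ∈ Metric.closedBall (0 : ℂ) 1 := by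
      rwa [Metric.mem_closedBall, dist_zero_right]
    rw [hz', alex_smul f.symm h0, ext_of_le f.symm hw]
    set v : Disk2 := f.symm ⟨u, hmem⟩ with hv
    rw [alex_smul f h0, ext_of_le f (norm_coe_le v)]
    have : (⟨(v : ℂ), by rw [Metric.mem_closedBall, dist_zero_right]; exact norm_coe_le v⟩
        : Disk2) = v := Subtype.ext rfl
    rw [this, hv, Homeomorph.apply_symm_apply]

end AlexanderAux

open AlexanderAux

/-- **Alexander's trick, boundary-fixing version.** Any homeomorphism of the
closed 2-disk which is the identity on the boundary circle is isotopic to the identity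
through homeomorphisms fixing the boundary pointwise, via the Alexander isotopy
`ψ_x(z) = (1-x)·f(z/(1-x))` for `|z| ≤ 1-x` and `ψ_x(z) = z` otherwise. -/
theorem alexander_trick_boundary_fixing
    (f : Disk2 ≃ₜ Disk2)
    (hbd : ∀ z : Disk2, ‖(z : ℂ)‖ = 1 → f z = z) :
    ∃ H : C(unitInterval × Disk2, Disk2),
      (∀ x : unitInterval, Function.Bijective fun z => H (x, z)) ∧
      (∀ z : Disk2, H (0, z) = f z) ∧
      (∀ z : Disk2, H (1, z) = z) ∧
      (∀ (x : unitInterval) (z : Disk2), ‖(z : ℂ)‖ = 1 → H (x, z) = z) ∧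
      -- the Alexander formula: `ψ_x(z) = (1-x)·f(z/(1-x))` on `|z| ≤ 1-x` …
      (∀ (x : unitInterval) (z w : Disk2),
        (w : ℂ) * (1 - (x : ℝ)) = (z : ℂ) → (H (x, z) : ℂ) = (1 - (x : ℝ)) * (f w : ℂ)) ∧
      -- … and the identity elsewhere
      (∀ (x : unitInterval) (z : Disk2), 1 - (x : ℝ) ≤ ‖(z : ℂ)‖ → H (x, z) = z) := by
  have ht0 : ∀ x : unitInterval, (0 : ℝ) ≤ 1 - (x : ℝ) := fun x => by
    have := x.2.2; linarith
  have ht1 : ∀ x : unitInterval, (1 : ℝ) - (x : ℝ) ≤ 1 := fun x => by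
    have := x.2.1; linarith
  have hmem : ∀ (x : unitInterval) (z : Disk2),
      alex f (1 - (x : ℝ), (z : ℂ)) ∈ Metric.closedBall (0 : ℂ) 1 := by
    intro x z
    rw [Metric.mem_closedBall, dist_zero_right]
    exact alex_norm_le f hbd (ht0 x) (ht1 x) (norm_coe_le z)
  have hmem' : ∀ (x : unitInterval) (z : Disk2),
      alex f.symm (1 - (x : ℝ), (z : ℂ)) ∈ Metric.closedBall (0 : ℂ) 1 := by
    intro x z
    rw [Metric.mem_closedBall, dist_zero_right]
    exact alex_norm_le f.symm (hbd_symm f hbd) (ht0 x) (ht1 x) (norm_coe_le z)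
  refine ⟨⟨fun p => ⟨alex f (1 - (p.1 : ℝ), (p.2 : ℂ)), hmem p.1 p.2⟩, ?_⟩, ?_, ?_, ?_, ?_, ?_, ?_⟩
  · apply Continuous.subtype_mk
    exact (alex_continuous f hbd).comp
      ((continuous_const.sub (continuous_subtype_val.comp continuous_fst)).prodMk
        (continuous_subtype_val.comp continuous_snd))
  · -- bijectivity
    intro x
    have hleft : Function.LeftInverse
        (fun z : Disk2 => (⟨alex f.symm (1 - (x : ℝ), (z : ℂ)), hmem' x z⟩ : Disk2))
        (fun z : Disk2 => (⟨alex f (1 - (x : ℝ), (z : ℂ)), hmem x z⟩ : Disk2)) := by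
      intro z
      apply Subtype.ext
      exact alex_inverse f.symm (hbd_symm f hbd) (ht0 x) (norm_coe_le z)
    have hright : Function.RightInverse
        (fun z : Disk2 => (⟨alex f.symm (1 - (x : ℝ), (z : ℂ)), hmem' x z⟩ : Disk2))
        (fun z : Disk2 => (⟨alex f (1 - (x : ℝ), (z : ℂ)), hmem x z⟩ : Disk2)) := by
      intro z
      apply Subtype.ext
      exact alex_inverse f hbd (ht0 x) (norm_coe_le z)
    exact ⟨hleft.injective, hright.surjective⟩
  · -- H(0,z) = f z
    intro z
    apply Subtype.ext
    show alex f (1 - ((0 : unitInterval) : ℝ), (z : ℂ)) = _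
    have h1 : ((0 : unitInterval) : ℝ) = 0 := rfl
    rw [h1, sub_zero]
    have : (z : ℂ) = (1 : ℝ) • ((1 : ℝ)⁻¹ • (z : ℂ)) := by simp
    rw [show ((z : ℂ)) = (1:ℝ) • (z : ℂ) by simp, alex_smul f one_pos,
      ext_of_le f (norm_coe_le z), one_smul]
  · -- H(1,z) = z
    intro z
    apply Subtype.ext
    show alex f (1 - ((1 : unitInterval) : ℝ), (z : ℂ)) = _
    have h1 : ((1 : unitInterval) : ℝ) = 1 := rfl
    rw [h1, sub_self, alex_zero]
  · -- boundary
    intro x z hz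
    apply Subtype.ext
    show alex f (1 - (x : ℝ), (z : ℂ)) = _
    exact alex_of_le f hbd (ht0 x) (by rw [hz]; exact ht1 x)
  · -- Alexander formula
    intro x z w hw
    show alex f (1 - (x : ℝ), (z : ℂ)) = _
    rcases eq_or_lt_of_le (ht0 x) with h0 | h0
    · have hx : (1 : ℝ) - (x : ℝ) = 0 := h0.symm
      have hxc : (1 : ℂ) - ((x : ℝ) : ℂ) = 0 := by
        rw [show (1:ℂ) - ((x:ℝ):ℂ) = (((1 - (x:ℝ)) : ℝ) : ℂ) by push_cast; ring, hx]
        simp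
      have hz0 : (z : ℂ) = 0 := by rw [← hw, hxc, mul_zero]
      rw [hz0, ← h0, alex_zero, hxc, zero_mul]
    · have hz : (z : ℂ) = (1 - (x : ℝ)) • (w : ℂ) := by
        rw [← hw, Complex.real_smul]; push_cast; ring
      rw [hz, alex_smul f h0, ext_of_le f (norm_coe_le w), Complex.real_smul]
      rw [Subtype.coe_eta]
      push_cast
      ring
  · -- identity elsewhere
    intro x z hz
    apply Subtype.ext
    show alex f (1 - (x : ℝ), (z : ℂ)) = _
    exact alex_of_le f hbd (ht0 x) hz
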